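/- arXiv:2211.01689 — 2 statements merged into one kernel-verified Lean document; each statement's English description precedes it below -/
import Mathlib

section
/- The automorphism group of the hypercube graph Q_d is isomorphic, as a group, to the semidirect product (ZMod 2)^d ⋊ Perm(Fin d), where Perm(Fin d) acts on the additive group (ZMod 2)^d = (Fin d → ZMod 2) by permuting coordinates. -/
/-! Translations `x ↦ x + v` and coordinate permutations are automorphisms of `Q_d`, and
`(v, σ) ↦ (x ↦ σ • x + v)` is an injective homomorphism out of the semidirect product. For
surjectivity, compose an automorphism with a translation so that it fixes `0`; it then permutes
the neighbours `e i = Pi.single i 1` of `0`, and after undoing that permutation it fixes `0`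
and every `e i`. Such an automorphism is the identity, by induction on the weight: a vector `x`
of weight at least two, with `x i = x j = 1`, is one of the only two common neighbours of
`x + e i` and `x + e j`, and the other one, `x + e i + e j`, is already fixed. -/

/-- Hamming weight of a point of the Boolean cube `{0,1}^d`. -/
def wt {d : ℕ} (x : Fin d → ZMod 2) : ℕ :=
  (Finset.univ.filter (fun i => x i = 1)).card

/-- The hypercube graph `Q_d`. -/
def cubeGraph (d : ℕ) : SimpleGraph (Fin d → ZMod 2) where
  Adj x y := wt (x + y) = 1
  symm := ⟨fun x y h => by (try dsimp only at h ⊢); rwa [add_comm] at h⟩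
  loopless := ⟨fun x h => by
    try dsimp only at h
    have hx : x + x = 0 := by funext i; exact CharTwo.add_self_eq_zero (x i)
    rw [hx] at h
    simp [wt] at h⟩

/-- The coordinate-permutation action of a permutation `σ` on `(ZMod 2)^d`,
as a multiplicative automorphism of `Multiplicative (Fin d → ZMod 2)`. -/
def permMulAut {d : ℕ} (σ : Equiv.Perm (Fin d)) :
    Multiplicative (Fin d → ZMod 2) ≃* Multiplicative (Fin d → ZMod 2) where
  toFun x := Multiplicative.ofAdd (fun i => Multiplicative.toAdd x (σ.symm i))
  invFun x := Multiplicative.ofAdd (fun i => Multiplicative.toAdd x (σ i))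
  left_inv x := by
    funext i
    exact congrArg (Multiplicative.toAdd x) (σ.symm_apply_apply i)
  right_inv x := by
    funext i
    exact congrArg (Multiplicative.toAdd x) (σ.apply_symm_apply i)
  map_mul' x y := rfl

/-- The permutation group of coordinates acting on `(ZMod 2)^d` by permuting
coordinates, as a homomorphism into the automorphism group. -/
def permHom (d : ℕ) :
    Equiv.Perm (Fin d) →* MulAut (Multiplicative (Fin d → ZMod 2)) where
  toFun := permMulAut
  map_one' := rfl
  map_mul' σ τ := rfl

section

variable {d : ℕ}

lemma ZMod.two_eq_zero_or_eq_one (a : ZMod 2) : a = 0 ∨ a = 1 := by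
  revert a; decide

lemma single_one_injective :
    Function.Injective (fun i : Fin d => (Pi.single i 1 : Fin d → ZMod 2)) :=
  fun i j h => by simpa [Pi.single_apply] using congrFun h i

lemma wt_eq_zero_iff {x : Fin d → ZMod 2} : wt x = 0 ↔ x = 0 := by
  simp only [wt, Finset.card_eq_zero, Finset.filter_eq_empty_iff, Finset.mem_univ,
    true_implies, funext_iff, Pi.zero_apply]
  refine forall_congr' fun j => ?_
  rcases ZMod.two_eq_zero_or_eq_one (x j) with h | h <;> simp [h]

lemma wt_eq_one_iff {x : Fin d → ZMod 2} : wt x = 1 ↔ ∃ i, x = Pi.single i 1 := by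
  simp only [wt, Finset.card_eq_one, Finset.ext_iff, funext_iff, Finset.mem_filter,
    Finset.mem_univ, true_and, Finset.mem_singleton]
  refine exists_congr fun i => forall_congr' fun j => ?_
  rcases ZMod.two_eq_zero_or_eq_one (x j) with h | h <;> by_cases hj : j = i <;> simp [h, hj]

lemma wt_comp_perm (x : Fin d → ZMod 2) (σ : Equiv.Perm (Fin d)) : wt (x ∘ σ) = wt x :=
  Finset.card_equiv σ fun i => by simp

lemma wt_add_single_lt {x : Fin d → ZMod 2} {i : Fin d} (hx : x i = 1) :
    wt (x + Pi.single i 1) < wt x := by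
  have : Finset.univ.filter (fun j => (x + Pi.single i 1 : Fin d → ZMod 2) j = 1) =
      (Finset.univ.filter (fun j => x j = 1)).erase i := by
    ext j
    by_cases hj : j = i
    · subst hj; simp [hx]
    · simp [hj]
  rw [wt, wt, this]
  exact Finset.card_erase_lt_of_mem (by simp [hx])

lemma cubeGraph_adj_iff {x y : Fin d → ZMod 2} :
    (cubeGraph d).Adj x y ↔ ∃ i, y = x + Pi.single i 1 := by
  refine wt_eq_one_iff.trans (exists_congr fun i => ?_)
  rw [add_comm, ← ZModModule.sub_eq_add, sub_eq_iff_eq_add']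

lemma cubeGraph_adj_add_single (x : Fin d → ZMod 2) (i : Fin d) :
    (cubeGraph d).Adj x (x + Pi.single i 1) :=
  cubeGraph_adj_iff.2 ⟨i, rfl⟩

lemma eq_or_eq_of_adj_add_single_of_adj_add_single {x u : Fin d → ZMod 2} {i j : Fin d}
    (hij : i ≠ j) (hi : (cubeGraph d).Adj (x + Pi.single i 1) u)
    (hj : (cubeGraph d).Adj (x + Pi.single j 1) u) :
    u = x ∨ u = x + Pi.single i 1 + Pi.single j 1 := by
  obtain ⟨a, rfl⟩ := cubeGraph_adj_iff.1 hi
  obtain ⟨b, hb⟩ := cubeGraph_adj_iff.1 hj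
  by_cases hai : a = i
  · left; rw [hai, add_assoc, ZModModule.add_self, add_zero]
  by_cases haj : a = j
  · right; rw [haj]
  have hbi : i = b := by simpa [Pi.single_apply, hij, Ne.symm hai] using congrFun hb i
  have hba : a = b := by simpa [Pi.single_apply, hai, haj] using congrFun hb a
  exact absurd (hba.trans hbi.symm) hai

namespace cubeGraph

def addRight (v : Fin d → ZMod 2) : cubeGraph d ≃g cubeGraph d where
  toEquiv := Equiv.addRight v
  map_rel_iff' {x y} := by
    change wt (x + v + (y + v)) = 1 ↔ wt (x + y) = 1
    rw [add_add_add_comm, ZModModule.add_self, add_zero]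

def permCoord (σ : Equiv.Perm (Fin d)) : cubeGraph d ≃g cubeGraph d where
  toEquiv := Equiv.piCongrLeft' (fun _ => ZMod 2) σ
  map_rel_iff' {x y} := by
    change wt ((x + y) ∘ σ.symm) = 1 ↔ wt (x + y) = 1
    rw [wt_comp_perm]

@[simp] lemma addRight_apply (v x : Fin d → ZMod 2) : addRight v x = x + v := rfl

@[simp] lemma permCoord_apply (σ : Equiv.Perm (Fin d)) (x : Fin d → ZMod 2) (i : Fin d) :
    permCoord σ x i = x (σ.symm i) := rfl

lemma permCoord_add (σ : Equiv.Perm (Fin d)) (x y : Fin d → ZMod 2) :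
    permCoord σ (x + y) = permCoord σ x + permCoord σ y := rfl

@[simp] lemma permCoord_zero (σ : Equiv.Perm (Fin d)) : permCoord σ 0 = 0 := rfl

@[simp] lemma permCoord_single (σ : Equiv.Perm (Fin d)) (i : Fin d) :
    permCoord σ (Pi.single i 1) = Pi.single (σ i) 1 := by
  ext j
  simp [Pi.single_apply, Equiv.symm_apply_eq]

def addRightHom (d : ℕ) :
    Multiplicative (Fin d → ZMod 2) →* (cubeGraph d ≃g cubeGraph d) where
  toFun v := addRight v.toAdd
  map_one' := RelIso.ext fun x => add_zero x
  map_mul' v w := RelIso.ext fun x => by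
    change x + (v.toAdd + w.toAdd) = x + w.toAdd + v.toAdd
    abel

def permCoordHom (d : ℕ) : Equiv.Perm (Fin d) →* (cubeGraph d ≃g cubeGraph d) where
  toFun := permCoord
  map_one' := rfl
  map_mul' _ _ := RelIso.ext fun _ => rfl

lemma addRightHom_comp_permHom (σ : Equiv.Perm (Fin d)) :
    (addRightHom d).comp (permHom d σ).toMonoidHom =
      (MulAut.conj (permCoordHom d σ)).toMonoidHom.comp (addRightHom d) := by
  refine MonoidHom.ext fun v => RelIso.ext fun x => ?_
  change x + permCoord σ v.toAdd = permCoord σ ((permCoord σ)⁻¹ x + v.toAdd)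
  rw [permCoord_add, RelIso.apply_inv_self]

def ofSemidirect (d : ℕ) :
    Multiplicative (Fin d → ZMod 2) ⋊[permHom d] Equiv.Perm (Fin d) →*
      (cubeGraph d ≃g cubeGraph d) :=
  SemidirectProduct.lift (addRightHom d) (permCoordHom d) addRightHom_comp_permHom

lemma ofSemidirect_apply (p : Multiplicative (Fin d → ZMod 2) ⋊[permHom d] Equiv.Perm (Fin d))
    (x : Fin d → ZMod 2) : ofSemidirect d p x = permCoord p.right x + p.left.toAdd := rfl

lemma ofSemidirect_injective : Function.Injective (ofSemidirect d) := by
  refine (injective_iff_map_eq_one _).2 fun p hp => ?_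
  have hfix (x : Fin d → ZMod 2) : permCoord p.right x + p.left.toAdd = x := by
    rw [← ofSemidirect_apply, hp]; rfl
  have hleft : p.left.toAdd = 0 := by simpa using hfix 0
  refine SemidirectProduct.ext hleft (Equiv.ext fun i => ?_)
  have := hfix (Pi.single i 1)
  rwa [hleft, add_zero, permCoord_single, single_one_injective.eq_iff] at this

lemma exists_perm_map_single (g : cubeGraph d ≃g cubeGraph d) (h0 : g 0 = 0) :
    ∃ σ : Equiv.Perm (Fin d), ∀ i, g (Pi.single i 1) = Pi.single (σ i) 1 := by
  have (i : Fin d) : ∃ j, g (Pi.single i 1) = Pi.single j 1 := by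
    simpa [h0] using cubeGraph_adj_iff.1 (g.map_adj_iff.2 (cubeGraph_adj_add_single 0 i))
  choose s hs using this
  have hs_inj : Function.Injective s := fun i j h =>
    single_one_injective (g.injective (by simp only [hs, h]))
  exact ⟨Equiv.ofBijective s hs_inj.bijective_of_finite, hs⟩

lemma eq_one_of_map_zero_of_map_single (g : cubeGraph d ≃g cubeGraph d) (h0 : g 0 = 0)
    (hsingle : ∀ i, g (Pi.single i 1) = Pi.single i 1) : g = 1 := by
  refine RelIso.ext fun x => ?_
  change g x = x
  induction hn : wt x using Nat.strong_induction_on generalizing x with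
  | _ n ih =>
  have fix (y : Fin d → ZMod 2) (hy : wt y < n) : g y = y := ih _ hy y rfl
  obtain hn0 | hn1 | hn2 : n = 0 ∨ n = 1 ∨ 1 < n := by omega
  · rw [wt_eq_zero_iff.1 (hn.trans hn0), h0]
  · obtain ⟨i, rfl⟩ := wt_eq_one_iff.1 (hn.trans hn1)
    exact hsingle i
  obtain ⟨i, hi, j, hj, hij⟩ := Finset.one_lt_card.1 (hn ▸ hn2 : 1 < wt x)
  simp only [Finset.mem_filter, Finset.mem_univ, true_and] at hi hj
  have hj' : (x + Pi.single i 1 : Fin d → ZMod 2) j = 1 := by simp [hij.symm, hj]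
  have lt_i := hn ▸ wt_add_single_lt hi
  have lt_ij := (wt_add_single_lt hj').trans lt_i
  have adj_i : (cubeGraph d).Adj (x + Pi.single i 1) (g x) :=
    fix _ lt_i ▸ g.map_adj_iff.2 (cubeGraph_adj_add_single x i).symm
  have adj_j : (cubeGraph d).Adj (x + Pi.single j 1) (g x) :=
    fix _ (hn ▸ wt_add_single_lt hj) ▸ g.map_adj_iff.2 (cubeGraph_adj_add_single x j).symm
  refine (eq_or_eq_of_adj_add_single_of_adj_add_single hij adj_i adj_j).resolve_right fun h => ?_
  have hx := congrFun (g.injective (h.trans (fix _ lt_ij).symm)) i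
  simp [hij] at hx

lemma ofSemidirect_surjective : Function.Surjective (ofSemidirect d) := by
  intro f
  set t := addRightHom d (Multiplicative.ofAdd (f 0))
  have ht : (t⁻¹ * f) 0 = 0 := by
    rw [RelIso.mul_apply, ← map_inv]
    simp [addRightHom]
  obtain ⟨σ, hσ⟩ := exists_perm_map_single (t⁻¹ * f) ht
  have : (permCoordHom d σ)⁻¹ * (t⁻¹ * f) = 1 := by
    refine eq_one_of_map_zero_of_map_single _
      (by rw [RelIso.mul_apply, ht, ← map_inv]; exact permCoord_zero _) fun i => ?_
    change (permCoord σ)⁻¹ ((t⁻¹ * f) (Pi.single i 1)) = _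
    rw [hσ, ← permCoord_single, RelIso.inv_apply_self]
  refine ⟨⟨Multiplicative.ofAdd (f 0), σ⟩, ?_⟩
  change t * permCoordHom d σ = f
  rw [inv_mul_eq_one.1 this, mul_inv_cancel_left]

end cubeGraph

end

/-- The automorphism group of the hypercube graph `Q_d` is isomorphic to the
semidirect product `(ZMod 2)^d ⋊ Perm (Fin d)`, where permutations act by
permuting coordinates. -/
theorem stmt1 (d : ℕ) :
    Nonempty ((cubeGraph d ≃g cubeGraph d) ≃*
      (Multiplicative (Fin d → ZMod 2)) ⋊[permHom d] Equiv.Perm (Fin d)) :=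
  ⟨(MulEquiv.ofBijective (cubeGraph.ofSemidirect d)
    ⟨cubeGraph.ofSemidirect_injective, cubeGraph.ofSemidirect_surjective⟩).symm⟩
end

section
/- A kernel k : {0,1}^d × {0,1}^d → ℝ is positive semidefinite and satisfies k(x + z, y + z) = k(x, y) for all x, y, z ∈ {0,1}^d if and only if there exist nonnegative reals α_T, indexed by the finite subsets T ⊆ Fin d, such that k(x, y) = Σ_{T ⊆ Fin d} α_T · w_T(x) · w_T(y) for all x, y ∈ {0,1}^d. -/
/-- The Walsh function `w_T` on the Boolean cube `{0,1}^d`. -/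
def walsh {d : ℕ} (T : Finset (Fin d)) (x : Fin d → ZMod 2) : ℝ :=
  (-1 : ℝ) ^ (T.filter (fun t => x t = 1)).card

/-- A kernel is positive semidefinite if it is symmetric and all its quadratic
forms on finite tuples are nonnegative. -/
def IsPSD {X : Type*} (k : X → X → ℝ) : Prop :=
  (∀ x y, k x y = k y x) ∧
    ∀ (m : ℕ) (x : Fin m → X) (c : Fin m → ℝ),
      0 ≤ ∑ i, ∑ j, c i * c j * k (x i) (x j)

/-!
Translation invariance gives `k x y = f (x + y)` with `f = k · 0`. The Walsh functions are the
characters of `{0,1}^d`, so `f = ∑_T f̂ T • w_T` with `f̂ T = 2⁻ᵈ ∑_u f u w_T u`, and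
`w_T (x + y) = w_T x * w_T y` turns this into the claimed expansion of `k`. Testing positive
semidefiniteness against the coefficient vector `w_T` gives `0 ≤ 4ᵈ f̂ T`. Conversely, a
nonnegative combination of the rank-one kernels `w_T ⊗ w_T` is positive semidefinite, and
`w_T z ^ 2 = 1` gives translation invariance.
-/

lemma neg_one_pow_val_add (a b : ZMod 2) :
    (-1 : ℝ) ^ (a + b).val = (-1) ^ a.val * (-1) ^ b.val := by
  rw [ZMod.val_add, ← neg_one_pow_eq_pow_mod_two, pow_add]

lemma walsh_eq_prod {d : ℕ} (T : Finset (Fin d)) (x : Fin d → ZMod 2) :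
    walsh T x = ∏ t ∈ T, (-1 : ℝ) ^ (x t).val := by
  rw [walsh, Finset.prod_pow_eq_pow_sum, Finset.card_filter]
  congr 1
  refine Finset.sum_congr rfl fun t _ => ?_
  generalize x t = a
  fin_cases a <;> rfl

lemma walsh_add {d : ℕ} (T : Finset (Fin d)) (x y : Fin d → ZMod 2) :
    walsh T (x + y) = walsh T x * walsh T y := by
  simp only [walsh_eq_prod, ← Finset.prod_mul_distrib, Pi.add_apply, neg_one_pow_val_add]

lemma walsh_mul_self {d : ℕ} (T : Finset (Fin d)) (x : Fin d → ZMod 2) :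
    walsh T x * walsh T x = 1 := by
  rw [walsh, ← mul_pow]
  norm_num

lemma sum_walsh {d : ℕ} (s : Fin d → ZMod 2) :
    ∑ T : Finset (Fin d), walsh T s = if s = 0 then 2 ^ d else 0 := by
  have hprod : ∑ T : Finset (Fin d), walsh T s = ∏ t, ((-1 : ℝ) ^ (s t).val + 1) := by
    simp only [Finset.prod_add_one, Finset.powerset_univ, walsh_eq_prod]
  rw [hprod]
  split_ifs with hs
  · norm_num [hs]
  · obtain ⟨t, ht⟩ := Function.ne_iff.mp hs
    refine Finset.prod_eq_zero (Finset.mem_univ t) ?_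
    generalize s t = a at ht
    fin_cases a
    · exact absurd rfl ht
    · show (-1 : ℝ) ^ 1 + 1 = 0
      norm_num

lemma isPSD_of_eq_sum_mul_mul {X ι : Type*} [Fintype ι] {k : X → X → ℝ} (α : ι → ℝ)
    (hα : ∀ i, 0 ≤ α i) (f : ι → X → ℝ) (hk : ∀ x y, k x y = ∑ i, α i * f i x * f i y) :
    IsPSD k := by
  refine ⟨fun x y => by simp only [hk, mul_right_comm], fun m x c => ?_⟩
  have hsquares : ∑ a, ∑ b, c a * c b * k (x a) (x b)
      = ∑ i, α i * (∑ a, c a * f i (x a)) ^ 2 := by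
    calc ∑ a, ∑ b, c a * c b * k (x a) (x b)
        = ∑ a, ∑ b, ∑ i, α i * (c a * f i (x a)) * (c b * f i (x b)) := by
          simp only [hk, Finset.mul_sum]
          exact Finset.sum_congr rfl fun a _ => Finset.sum_congr rfl fun b _ =>
            Finset.sum_congr rfl fun i _ => by ring
      _ = ∑ a, ∑ i, ∑ b, α i * (c a * f i (x a)) * (c b * f i (x b)) :=
          Finset.sum_congr rfl fun a _ => Finset.sum_comm
      _ = ∑ i, ∑ a, ∑ b, α i * (c a * f i (x a)) * (c b * f i (x b)) := Finset.sum_comm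
      _ = ∑ i, α i * (∑ a, c a * f i (x a)) ^ 2 := by
          refine Finset.sum_congr rfl fun i _ => ?_
          rw [sq, Finset.sum_mul_sum, Finset.mul_sum]
          simp only [Finset.mul_sum, mul_assoc]
  rw [hsquares]
  exact Finset.sum_nonneg fun i _ => mul_nonneg (hα i) (sq_nonneg _)

lemma IsPSD.sum_sum_nonneg {X : Type*} [Fintype X] {k : X → X → ℝ} (hk : IsPSD k)
    (c : X → ℝ) : 0 ≤ ∑ u, ∑ v, c u * c v * k u v := by
  let e := (Fintype.equivFin X).symm
  convert hk.2 _ e (c ∘ e) using 1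
  rw [← e.sum_comp]
  exact Finset.sum_congr rfl fun a _ => (e.sum_comp _).symm

lemma eq_sub_zero_of_add_invariant {G : Type*} [AddGroup G] {k : G → G → ℝ}
    (hk : ∀ x y z, k (x + z) (y + z) = k x y) (x y : G) : k x y = k (x - y) 0 := by
  rw [← hk x y (-y), sub_eq_add_neg, add_neg_cancel]

noncomputable def walshCoeff {d : ℕ} (f : (Fin d → ZMod 2) → ℝ) (T : Finset (Fin d)) : ℝ :=
  (∑ u, f u * walsh T u) / 2 ^ d

lemma sum_walshCoeff_mul_walsh {d : ℕ} (f : (Fin d → ZMod 2) → ℝ) (s : Fin d → ZMod 2) :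
    ∑ T, walshCoeff f T * walsh T s = f s := by
  have hdelta : ∀ u, ∑ T : Finset (Fin d), f u * walsh T u * walsh T s / 2 ^ d
      = if u = s then f s else 0 := by
    intro u
    simp only [mul_assoc, ← walsh_add, ← Finset.mul_sum, ← Finset.sum_div, sum_walsh,
      ← ZModModule.sub_eq_add, sub_eq_zero]
    split_ifs with h
    · rw [h, mul_div_cancel_right₀ _ (by positivity)]
    · simp
  simp only [walshCoeff, div_mul_eq_mul_div, Finset.sum_mul, Finset.sum_div]
  rw [Finset.sum_comm]
  simp only [hdelta, Finset.sum_ite_eq', Finset.mem_univ, if_true]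

lemma walshCoeff_nonneg {d : ℕ} {k : (Fin d → ZMod 2) → (Fin d → ZMod 2) → ℝ} (hk : IsPSD k)
    (hinv : ∀ x y z, k (x + z) (y + z) = k x y) (T : Finset (Fin d)) :
    0 ≤ walshCoeff (fun u => k u 0) T := by
  have hquad : ∑ u, ∑ v, walsh T u * walsh T v * k u v
      = 2 ^ d * ∑ w, k w 0 * walsh T w := by
    calc ∑ u, ∑ v, walsh T u * walsh T v * k u v
        = ∑ u, ∑ v, k (u + v) 0 * walsh T (u + v) := by
          refine Finset.sum_congr rfl fun u _ => Finset.sum_congr rfl fun v _ => ?_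
          rw [walsh_add, eq_sub_zero_of_add_invariant hinv u v, ZModModule.sub_eq_add]
          ring
      _ = ∑ _u : Fin d → ZMod 2, ∑ w, k w 0 * walsh T w :=
          Finset.sum_congr rfl fun u _ =>
            Equiv.sum_comp (Equiv.addLeft u) (fun w => k w 0 * walsh T w)
      _ = 2 ^ d * ∑ w, k w 0 * walsh T w := by simp
  have hnonneg := hk.sum_sum_nonneg (walsh T)
  rw [hquad] at hnonneg
  exact div_nonneg (nonneg_of_mul_nonneg_right hnonneg (by positivity)) (by positivity)

/-- A kernel on the Boolean cube is positive semidefinite and translation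
invariant iff it admits a Walsh expansion with nonnegative coefficients. -/
theorem stmt2 (d : ℕ) (k : (Fin d → ZMod 2) → (Fin d → ZMod 2) → ℝ) :
    (IsPSD k ∧ ∀ x y z : Fin d → ZMod 2, k (x + z) (y + z) = k x y) ↔
      ∃ α : Finset (Fin d) → ℝ, (∀ T, 0 ≤ α T) ∧
        ∀ x y : Fin d → ZMod 2,
          k x y = ∑ T : Finset (Fin d), α T * walsh T x * walsh T y := by
  constructor
  · rintro ⟨hk, hinv⟩
    refine ⟨walshCoeff (fun u => k u 0), walshCoeff_nonneg hk hinv, fun x y => ?_⟩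
    rw [eq_sub_zero_of_add_invariant hinv, ZModModule.sub_eq_add,
      ← sum_walshCoeff_mul_walsh (fun u => k u 0) (x + y)]
    simp only [walsh_add, mul_assoc]
  · rintro ⟨α, hα, hk⟩
    refine ⟨isPSD_of_eq_sum_mul_mul α hα walsh hk, fun x y z => ?_⟩
    simp only [hk, walsh_add]
    exact Finset.sum_congr rfl fun T _ => by
      linear_combination α T * walsh T x * walsh T y * walsh_mul_self T z
end
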